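/- (Gaussian covariance of random tangent vectors, real case.) Let Γ ∈ ℝ^{r×p} be a random matrix whose entries are i.i.d. standard normal random variables, and let Y_i, Y_j ∈ ℝ^{r×p} satisfy Y_i Y_iᵀ = Y_j Y_jᵀ = I_r. Then the entrywise expectation satisfies E[(Γ − Y_i Γᵀ Y_i)(Γ − Y_j Γᵀ Y_j)ᵀ] = (p − 2) I_r + tr(Y_i Y_jᵀ) · Y_i Y_jᵀ. In particular, E[(Γ − Y_i Γᵀ Y_i)(Γ − Y_i Γᵀ Y_i)ᵀ] = (p + r − 2) I_r. -/

import Mathlib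

/-!
Write `T_Y Γ = Γ - Y Γᵀ Y` and let `E_{dc}` be the matrix units. The entries of a standard
Gaussian matrix `Γ` are centred and orthonormal in `L²`, and every entry of `T_Y Γ` is a linear
form in them, so `E[T_Y Γ (T_{Y'} Γ)ᵀ] = ∑_{d,c} T_Y E_{dc} (T_{Y'} E_{dc})ᵀ`. Expanding, the sum
splits into `∑ E Eᵀ = p I`, `∑ E Y'ᵀ E = Y'`, `∑ Eᵀ Y Eᵀ = Yᵀ` and `∑ Eᵀ M E = tr M · I`, which
for `Y Yᵀ = Y' Y'ᵀ = I` add up to `(p - 2) I + tr(Y Y'ᵀ) Y Y'ᵀ`.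
-/

open Matrix MeasureTheory ProbabilityTheory

/-- The law of an `r × p` random matrix with i.i.d. standard normal entries
(entries viewed as functions `Fin r → Fin p → ℝ`). -/
noncomputable def gaussMatReal (r p : ℕ) : Measure (Fin r → Fin p → ℝ) :=
  Measure.pi fun _ : Fin r => Measure.pi fun _ : Fin p => gaussianReal 0 1

structure IsCenteredOrthonormal {Ω κ : Type*} [MeasurableSpace Ω] (μ : Measure Ω)
    (X : κ → Ω → ℝ) : Prop where
  measurable : ∀ k, Measurable (X k)
  memLp : ∀ k, MemLp (X k) 2 μ
  integral_eq_zero : ∀ k, ∫ ω, X k ω ∂μ = 0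
  integral_mul_self : ∀ k, ∫ ω, X k ω * X k ω ∂μ = 1
  integral_mul_of_ne : ∀ k l, k ≠ l → ∫ ω, X k ω * X l ω ∂μ = 0

theorem integral_comp_eval_mul_comp_eval_of_ne {ι : Type*} [Fintype ι] {X : ι → Type*}
    {mX : ∀ i, MeasurableSpace (X i)} {μ : ∀ i, Measure (X i)} [∀ i, IsProbabilityMeasure (μ i)]
    {i j : ι} (hij : i ≠ j) {f : X i → ℝ} {g : X j → ℝ} (hf : Measurable f) (hg : Measurable g) :
    ∫ x, f (x i) * g (x j) ∂Measure.pi μ = (∫ y, f y ∂μ i) * ∫ y, g y ∂μ j := by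
  have hindep : IndepFun (fun x => f (x i)) (fun x => g (x j)) (Measure.pi μ) :=
    ((iIndepFun_pi (X := fun _ => id) fun _ => aemeasurable_id).indepFun hij).comp hf hg
  rw [hindep.integral_fun_mul_eq_mul_integral
      (hf.comp (measurable_pi_apply i)).aestronglyMeasurable
      (hg.comp (measurable_pi_apply j)).aestronglyMeasurable,
    integral_comp_eval hf.aestronglyMeasurable, integral_comp_eval hg.aestronglyMeasurable]

namespace IsCenteredOrthonormal

variable {Ω κ : Type*} [MeasurableSpace Ω] {μ : Measure Ω} {X : κ → Ω → ℝ}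

theorem comp_injective (h : IsCenteredOrthonormal μ X) {κ' : Type*} {e : κ' → κ}
    (he : Function.Injective e) : IsCenteredOrthonormal μ (X ∘ e) where
  measurable k := h.measurable (e k)
  memLp k := h.memLp (e k)
  integral_eq_zero k := h.integral_eq_zero (e k)
  integral_mul_self k := h.integral_mul_self (e k)
  integral_mul_of_ne _ _ hkl := h.integral_mul_of_ne _ _ (he.ne hkl)

theorem pi [IsProbabilityMeasure μ] (h : IsCenteredOrthonormal μ X) (ι : Type*) [Fintype ι] :
    IsCenteredOrthonormal (Measure.pi fun _ : ι => μ) (fun (q : ι × κ) x => X q.2 (x q.1)) where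
  measurable q := (h.measurable q.2).comp (measurable_pi_apply q.1)
  memLp q := (h.memLp q.2).comp_measurePreserving (measurePreserving_eval _ q.1)
  integral_eq_zero q := by
    rw [integral_comp_eval (h.memLp q.2).1, h.integral_eq_zero]
  integral_mul_self q := by
    rw [← h.integral_mul_self q.2]
    exact integral_comp_eval (μ := fun _ => μ) ((h.memLp q.2).integrable_mul (h.memLp q.2)).1
  integral_mul_of_ne q q' hqq' := by
    obtain ⟨i, k⟩ := q
    obtain ⟨j, l⟩ := q'
    by_cases hij : i = j
    · subst hij
      have hkl : k ≠ l := fun hkl => hqq' (by rw [hkl])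
      rw [← h.integral_mul_of_ne k l hkl]
      exact integral_comp_eval (μ := fun _ => μ) ((h.memLp k).integrable_mul (h.memLp l)).1
    · rw [integral_comp_eval_mul_comp_eval_of_ne hij (h.measurable k) (h.measurable l),
        h.integral_eq_zero, zero_mul]

variable [Fintype κ]

theorem integrable_sum_mul_sum (h : IsCenteredOrthonormal μ X) (α β : κ → ℝ) :
    Integrable (fun ω => (∑ k, α k * X k ω) * ∑ k, β k * X k ω) μ :=
  (memLp_finsetSum _ fun k _ => (h.memLp k).const_mul (α k)).integrable_mul
    (memLp_finsetSum _ fun k _ => (h.memLp k).const_mul (β k))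

theorem integral_sum_mul_sum (h : IsCenteredOrthonormal μ X) (α β : κ → ℝ) :
    ∫ ω, (∑ k, α k * X k ω) * (∑ k, β k * X k ω) ∂μ = ∑ k, α k * β k := by
  classical
  have hδ : ∀ k l, ∫ ω, X k ω * X l ω ∂μ = if k = l then 1 else 0 := fun k l => by
    split_ifs with hkl
    · subst hkl; exact h.integral_mul_self k
    · exact h.integral_mul_of_ne k l hkl
  have hint : ∀ k l, Integrable (fun ω => α k * β l * (X k ω * X l ω)) μ := fun k l =>
    ((h.memLp k).integrable_mul (h.memLp l)).const_mul _
  have hexpand : ∀ ω, (∑ k, α k * X k ω) * (∑ k, β k * X k ω)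
      = ∑ k, ∑ l, α k * β l * (X k ω * X l ω) := fun ω => by
    simp_rw [Finset.sum_mul_sum, mul_mul_mul_comm]
  simp_rw [hexpand]
  rw [integral_finsetSum _ fun k _ => integrable_finsetSum _ fun l _ => hint k l]
  simp_rw [integral_finsetSum _ fun l _ => hint _ l, integral_const_mul, hδ, mul_ite, mul_one,
    mul_zero, Finset.sum_ite_eq, Finset.mem_univ, if_true]

end IsCenteredOrthonormal

theorem isCenteredOrthonormal_gaussianReal :
    IsCenteredOrthonormal (gaussianReal 0 1) (fun _ : Unit => id) where
  measurable _ := measurable_id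
  memLp _ := memLp_id_gaussianReal 2
  integral_eq_zero _ := integral_id_gaussianReal
  integral_mul_self _ := by
    have h := variance_eq_sub (memLp_id_gaussianReal (μ := 0) (v := 1) 2)
    simp only [variance_id_gaussianReal] at h
    simp only [id, ← sq]
    simpa using h.symm
  integral_mul_of_ne _ _ h := absurd rfl h

theorem isCenteredOrthonormal_pi_gaussianReal (ι : Type*) [Fintype ι] :
    IsCenteredOrthonormal (Measure.pi fun _ : ι => gaussianReal 0 1) (fun i x => x i) :=
  (isCenteredOrthonormal_gaussianReal.pi ι).comp_injective (e := fun i => (i, ()))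
    fun _ _ h => congrArg Prod.fst h

theorem isCenteredOrthonormal_gaussMatReal (r p : ℕ) :
    IsCenteredOrthonormal (gaussMatReal r p) fun (q : Fin r × Fin p) g => g q.1 q.2 :=
  (isCenteredOrthonormal_pi_gaussianReal (Fin p)).pi (Fin r)

namespace Matrix

@[simps]
def stiefelTangent {R m n : Type*} [CommRing R] [Fintype m] [Fintype n] (Y : Matrix m n R) :
    Matrix m n R →ₗ[R] Matrix m n R where
  toFun Γ := Γ - Y * Γᵀ * Y
  map_add' Γ Γ' := by
    simp only [transpose_add, Matrix.mul_add, Matrix.add_mul]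
    abel
  map_smul' c Γ := by
    simp only [transpose_smul, Matrix.mul_smul, Matrix.smul_mul, smul_sub, RingHom.id_apply]

variable {R : Type*} [CommRing R] {m n m' n' : Type*} [Fintype m] [Fintype n] [DecidableEq m]
  [DecidableEq n]

theorem linearMap_apply_eq_sum (L : Matrix m n R →ₗ[R] Matrix m' n' R) (Γ : Matrix m n R)
    (a : m') (k : n') : L Γ a k = ∑ q : m × n, L (single q.1 q.2 1) a k * Γ q.1 q.2 := by
  conv_lhs => rw [matrix_eq_sum_single Γ]
  simp only [map_sum, Fintype.sum_prod_type, Matrix.sum_apply]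
  refine Finset.sum_congr rfl fun i _ => Finset.sum_congr rfl fun j _ => ?_
  have hsingle : single i j (Γ i j) = Γ i j • single i j (1 : R) := by
    rw [smul_single, smul_eq_mul, mul_one]
  rw [hsingle, map_smul, smul_apply, smul_eq_mul, mul_comm]

theorem sum_single_mul_transpose_single :
    ∑ q : m × n, single q.1 q.2 (1 : R) * (single q.1 q.2 (1 : R))ᵀ
      = (Fintype.card n : R) • (1 : Matrix m m R) := by
  simp only [transpose_single, single_mul_single_same, mul_one, Fintype.sum_prod_type,
    Finset.sum_const, Finset.card_univ, ← Finset.smul_sum, sum_single_one, Nat.cast_smul_eq_nsmul]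

theorem sum_single_mul_mul_single (A : Matrix n m R) :
    ∑ q : m × n, single q.1 q.2 (1 : R) * A * single q.1 q.2 (1 : R) = Aᵀ := by
  ext i j
  simp [Matrix.sum_apply, single_apply, Fintype.sum_prod_type, ite_and]

theorem sum_transpose_single_mul_mul_single (M : Matrix m m R) :
    ∑ q : m × n, (single q.1 q.2 (1 : R))ᵀ * M * single q.1 q.2 (1 : R)
      = M.trace • (1 : Matrix n n R) := by
  ext i j
  simp [transpose_single, Matrix.sum_apply, single_apply, one_apply, Fintype.sum_prod_type, trace,
    ite_and]

theorem sum_stiefelTangent_mul_transpose {Y Y' : Matrix m n R} (hY : Y * Yᵀ = 1)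
    (hY' : Y' * Y'ᵀ = 1) :
    ∑ q : m × n, stiefelTangent Y (single q.1 q.2 1) * (stiefelTangent Y' (single q.1 q.2 1))ᵀ
      = ((Fintype.card n : R) - 2) • (1 : Matrix m m R) + (Y * Y'ᵀ).trace • (Y * Y'ᵀ) := by
  have hexpand : ∀ E : Matrix m n R, stiefelTangent Y E * (stiefelTangent Y' E)ᵀ
      = E * Eᵀ - E * Y'ᵀ * E * Y'ᵀ - Y * (Eᵀ * Y * Eᵀ) + Y * (Eᵀ * (Y * Y'ᵀ) * E) * Y'ᵀ := by
    intro E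
    simp only [stiefelTangent_apply, transpose_sub, transpose_mul, transpose_transpose,
      Matrix.sub_mul, Matrix.mul_sub, Matrix.mul_assoc]
    abel
  have hsymm : ∑ q : m × n, (single q.1 q.2 (1 : R))ᵀ * Y * (single q.1 q.2 (1 : R))ᵀ = Yᵀ := by
    rw [← transpose_transpose (∑ q : m × n, _), transpose_sum]
    simp only [transpose_mul, transpose_transpose, ← Matrix.mul_assoc]
    rw [sum_single_mul_mul_single, transpose_transpose]
  simp only [hexpand, Finset.sum_add_distrib, Finset.sum_sub_distrib, ← Matrix.sum_mul,
    ← Matrix.mul_sum, sum_single_mul_transpose_single, sum_single_mul_mul_single,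
    sum_transpose_single_mul_mul_single, hsymm, transpose_transpose, hY, hY',
    Matrix.mul_smul, Matrix.smul_mul, Matrix.mul_one]
  module

end Matrix

theorem IsCenteredOrthonormal.integral_linearMap_mul_transpose {Ω : Type*} [MeasurableSpace Ω]
    {μ : Measure Ω} {m n m' m'' n' : Type*} [Fintype m] [Fintype n] [DecidableEq m]
    [DecidableEq n] [Fintype n'] {Γ : Ω → Matrix m n ℝ}
    (hΓ : IsCenteredOrthonormal μ fun (q : m × n) ω => Γ ω q.1 q.2)
    (L₁ : Matrix m n ℝ →ₗ[ℝ] Matrix m' n' ℝ) (L₂ : Matrix m n ℝ →ₗ[ℝ] Matrix m'' n' ℝ)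
    (a : m') (b : m'') :
    ∫ ω, (L₁ (Γ ω) * (L₂ (Γ ω))ᵀ) a b ∂μ
      = (∑ q : m × n, L₁ (single q.1 q.2 1) * (L₂ (single q.1 q.2 1))ᵀ) a b := by
  simp_rw [mul_apply, transpose_apply, linearMap_apply_eq_sum _ (Γ _)]
  rw [integral_finsetSum _ fun _ _ => hΓ.integrable_sum_mul_sum _ _]
  simp_rw [hΓ.integral_sum_mul_sum, Matrix.sum_apply, mul_apply, transpose_apply]
  exact Finset.sum_comm

theorem gaussian_tangent_covariance_general
    (r p : ℕ)
    (Yi Yj : Matrix (Fin r) (Fin p) ℝ)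
    (hYi : Yi * Yiᵀ = 1) (hYj : Yj * Yjᵀ = 1) :
    (∀ a b : Fin r,
      (∫ g : Fin r → Fin p → ℝ,
          (((Matrix.of g - Yi * (Matrix.of g)ᵀ * Yi) *
            (Matrix.of g - Yj * (Matrix.of g)ᵀ * Yj)ᵀ) a b) ∂(gaussMatReal r p))
        = (((p : ℝ) - 2) • (1 : Matrix (Fin r) (Fin r) ℝ)
            + (Yi * Yjᵀ).trace • (Yi * Yjᵀ)) a b) ∧
    (∀ a b : Fin r,
      (∫ g : Fin r → Fin p → ℝ,
          (((Matrix.of g - Yi * (Matrix.of g)ᵀ * Yi) *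
            (Matrix.of g - Yi * (Matrix.of g)ᵀ * Yi)ᵀ) a b) ∂(gaussMatReal r p))
        = (((p : ℝ) + r - 2) • (1 : Matrix (Fin r) (Fin r) ℝ)) a b) := by
  have hcov : ∀ {Y Y' : Matrix (Fin r) (Fin p) ℝ}, Y * Yᵀ = 1 → Y' * Y'ᵀ = 1 → ∀ a b : Fin r,
      ∫ g : Fin r → Fin p → ℝ, ((Matrix.of g - Y * (Matrix.of g)ᵀ * Y) *
          (Matrix.of g - Y' * (Matrix.of g)ᵀ * Y')ᵀ) a b ∂(gaussMatReal r p)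
        = (((p : ℝ) - 2) • (1 : Matrix (Fin r) (Fin r) ℝ) + (Y * Y'ᵀ).trace • (Y * Y'ᵀ)) a b := by
    intro Y Y' hY hY' a b
    have h := (isCenteredOrthonormal_gaussMatReal r p).integral_linearMap_mul_transpose
      (Γ := Matrix.of) (stiefelTangent Y) (stiefelTangent Y') a b
    rwa [sum_stiefelTangent_mul_transpose hY hY', Fintype.card_fin] at h
  refine ⟨hcov hYi hYj, fun a b => ?_⟩
  rw [hcov hYi hYi, hYi, trace_one, Fintype.card_fin, ← add_smul, sub_add_eq_add_sub]

/-- **Gaussian covariance of random tangent vectors (real case).**  If `Γ` has i.i.d. standard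
normal entries and `Y_i Y_iᵀ = Y_j Y_jᵀ = I_r`, then
`E[(Γ − Y_i Γᵀ Y_i)(Γ − Y_j Γᵀ Y_j)ᵀ] = (p − 2) I_r + tr(Y_i Y_jᵀ) Y_i Y_jᵀ` entrywise;
in particular for `i = j` the expectation is `(p + r − 2) I_r`. -/
theorem gaussian_tangent_covariance
    (r p : ℕ) (hr : 1 ≤ r) (hrp : r ≤ p)
    (Yi Yj : Matrix (Fin r) (Fin p) ℝ)
    (hYi : Yi * Yiᵀ = 1) (hYj : Yj * Yjᵀ = 1) :
    (∀ a b : Fin r,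
      (∫ g : Fin r → Fin p → ℝ,
          (((Matrix.of g - Yi * (Matrix.of g)ᵀ * Yi) *
            (Matrix.of g - Yj * (Matrix.of g)ᵀ * Yj)ᵀ) a b) ∂(gaussMatReal r p))
        = (((p : ℝ) - 2) • (1 : Matrix (Fin r) (Fin r) ℝ)
            + (Yi * Yjᵀ).trace • (Yi * Yjᵀ)) a b) ∧
    (∀ a b : Fin r,
      (∫ g : Fin r → Fin p → ℝ,
          (((Matrix.of g - Yi * (Matrix.of g)ᵀ * Yi) *
            (Matrix.of g - Yi * (Matrix.of g)ᵀ * Yi)ᵀ) a b) ∂(gaussMatReal r p))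
        = (((p : ℝ) + r - 2) • (1 : Matrix (Fin r) (Fin r) ℝ)) a b) :=
  gaussian_tangent_covariance_general r p Yi Yj hYi hYj
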